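/- A correctly formed homomorphic-addition output is uniformly distributed over the ciphertexts of the sum: if (R₁, C₁) ∈ C(m₁) and (R₂, C₂) ∈ C(m₂), and y is drawn from the uniform probability mass function on ZMod r, then the pushforward distribution of y under the map y ↦ (R₁ * R₂ * g^y, C₁ * C₂ * U^y) is the uniform probability mass function on the finite set C(m₁ + m₂). -/

import Mathlib

/-!
Write `E(m, t) = (g ^ t, g ^ m * U ^ t)` for the ciphertext of `m` with randomness `t`.
Since `g ^ r = 1`, exponents may be added and multiplied in `ZMod r`, so `E` is multiplicative:
`E(m₁, t₁) * E(m₂, t₂) = E(m₁ + m₂, t₁ + t₂)`, and re-randomizing by `(g ^ y, U ^ y)` sends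
`E(m, t)` to `E(m, t + y)`. The output is therefore `E(m₁ + m₂, t₁ + t₂ + y)`; a translate of a
uniform `y` is uniform, and `t ↦ E(m, t)` is injective because its first component is, so the
pushforward is uniform on the image `C(m₁ + m₂)`.
-/

open Function Finset

namespace PMF

theorem map_uniformOfFintype_of_injective {α β : Type*} [Fintype α] [Nonempty α] [DecidableEq β]
    {f : α → β} (hf : Injective f) :
    (uniformOfFintype α).map f = uniformOfFinset (univ.image f) (univ_nonempty.image f) := by
  ext b
  by_cases hb : b ∈ univ.image f
  · obtain ⟨a, -, rfl⟩ := mem_image.mp hb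
    rw [uniformOfFinset_apply_of_mem _ hb, card_image_of_injective _ hf]
    classical
    simp [map_apply, hf.eq_iff]
  · rw [uniformOfFinset_apply_of_notMem _ hb, map_apply]
    exact ENNReal.tsum_eq_zero.mpr fun a =>
      if_neg fun h : b = f a => hb (h ▸ mem_image_of_mem f (mem_univ a))

theorem map_uniformOfFintype_equiv {α : Type*} [Fintype α] [Nonempty α] (e : α ≃ α) :
    (uniformOfFintype α).map e = uniformOfFintype α := by
  classical
  rw [map_uniformOfFintype_of_injective e.injective]
  simp only [image_univ_equiv]
  rfl

end PMF

section PowVal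

variable {M : Type*} [Monoid M] {n : ℕ} {g : M}

theorem pow_val_add_of_pow_eq_one [NeZero n] (hg : g ^ n = 1) (a b : ZMod n) :
    g ^ (a + b).val = g ^ a.val * g ^ b.val := by
  rw [ZMod.val_add, ← pow_eq_pow_mod _ hg, pow_add]

theorem pow_val_mul_of_pow_eq_one (hg : g ^ n = 1) (a b : ZMod n) :
    g ^ (a * b).val = (g ^ a.val) ^ b.val := by
  rw [ZMod.val_mul, ← pow_eq_pow_mod _ hg, pow_mul]

end PowVal

theorem pow_eq_one_of_bijective_pow_val {G : Type*} [Group G] {n : ℕ} [NeZero n] {g : G}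
    (hgen : Bijective fun t : ZMod n => g ^ t.val) : g ^ n = 1 := by
  have hcard : Nat.card G = n := by
    rw [← Nat.card_congr (Equiv.ofBijective _ hgen), Nat.card_zmod]
  exact hcard ▸ pow_card_eq_one'

namespace ElGamal

variable {G : Type*} [CommGroup G] {r : ℕ} (g : G) (u : ZMod r)

def ciphertext (m t : ZMod r) : G × G :=
  (g ^ t.val, g ^ m.val * (g ^ u.val) ^ t.val)

variable {g}

theorem ciphertext_injective (hinj : Injective fun t : ZMod r => g ^ t.val) (m : ZMod r) :
    Injective (ciphertext g u m) :=
  fun _ _ h => hinj (congrArg Prod.fst h)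

variable [NeZero r] (hg : g ^ r = 1)
include hg

theorem ciphertext_mul_ciphertext (m₁ m₂ t₁ t₂ : ZMod r) :
    ciphertext g u m₁ t₁ * ciphertext g u m₂ t₂ = ciphertext g u (m₁ + m₂) (t₁ + t₂) := by
  have hU : (g ^ u.val) ^ r = 1 := by rw [pow_right_comm, hg, one_pow]
  simp only [ciphertext, Prod.mk_mul_mk, pow_val_add_of_pow_eq_one hg, pow_val_add_of_pow_eq_one hU,
    mul_mul_mul_comm]

theorem ciphertext_mul_rerandomizer (m t y : ZMod r) :
    ciphertext g u m t * (g ^ y.val, (g ^ u.val) ^ y.val) = ciphertext g u m (t + y) := by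
  simp only [ciphertext, Prod.mk_mul_mk, ← pow_val_mul_of_pow_eq_one hg, mul_add,
    pow_val_add_of_pow_eq_one hg, mul_assoc]

end ElGamal

open ElGamal in
theorem elgamal_rerandomized_add_uniform_general {G : Type*} [CommGroup G]
    [DecidableEq G] (r : ℕ) [Fact r.Prime] (g : G)
    (hgen : Function.Bijective fun t : ZMod r => g ^ t.val)
    (u : ZMod r) (m₁ m₂ : ZMod r) (R₁ C₁ R₂ C₂ : G)
    (h₁ : ∃ t : ZMod r, R₁ = g ^ t.val ∧ C₁ = g ^ m₁.val * (g ^ u.val) ^ t.val)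
    (h₂ : ∃ t : ZMod r, R₂ = g ^ t.val ∧ C₂ = g ^ m₂.val * (g ^ u.val) ^ t.val) :
    PMF.map
        (fun y : ZMod r => (R₁ * R₂ * g ^ y.val, C₁ * C₂ * (g ^ u.val) ^ y.val))
        (PMF.uniformOfFintype (ZMod r)) =
      PMF.uniformOfFinset
        (Finset.univ.image fun t : ZMod r =>
          (g ^ t.val, g ^ (m₁ + m₂).val * (g ^ u.val) ^ t.val))
        (Finset.univ_nonempty.image _) := by
  have hg : g ^ r = 1 := pow_eq_one_of_bijective_pow_val hgen
  obtain ⟨t₁, rfl, rfl⟩ := h₁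
  obtain ⟨t₂, rfl, rfl⟩ := h₂
  have hout : ∀ y : ZMod r, ciphertext g u m₁ t₁ * ciphertext g u m₂ t₂ *
      (g ^ y.val, (g ^ u.val) ^ y.val) = ciphertext g u (m₁ + m₂) (t₁ + t₂ + y) := fun y => by
    rw [ciphertext_mul_ciphertext u hg, ciphertext_mul_rerandomizer u hg]
  calc _ = (PMF.uniformOfFintype (ZMod r)).map
          (ciphertext g u (m₁ + m₂) ∘ Equiv.addLeft (t₁ + t₂)) :=
        congrArg (PMF.map · _) (funext hout)
    _ = (PMF.uniformOfFintype (ZMod r)).map (ciphertext g u (m₁ + m₂)) := by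
        rw [← PMF.map_comp, PMF.map_uniformOfFintype_equiv]
    _ = _ := PMF.map_uniformOfFintype_of_injective (ciphertext_injective u hgen.injective _)

/-- A correctly formed homomorphic-addition output with a uniformly random
re-randomizer `y` is uniformly distributed over the ciphertexts of the sum:
the pushforward of the uniform distribution on `ZMod r` under
`y ↦ (R₁ * R₂ * g ^ y, C₁ * C₂ * U ^ y)` is the uniform distribution on
`C(m₁ + m₂)`. -/
theorem elgamal_rerandomized_add_uniform {G : Type*} [CommGroup G] [Fintype G]
    [DecidableEq G] (r : ℕ) [Fact r.Prime] (hcard : Fintype.card G = r) (g : G)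
    (hgen : Function.Bijective fun t : ZMod r => g ^ t.val)
    (u : ZMod r) (m₁ m₂ : ZMod r) (R₁ C₁ R₂ C₂ : G)
    (h₁ : ∃ t : ZMod r, R₁ = g ^ t.val ∧ C₁ = g ^ m₁.val * (g ^ u.val) ^ t.val)
    (h₂ : ∃ t : ZMod r, R₂ = g ^ t.val ∧ C₂ = g ^ m₂.val * (g ^ u.val) ^ t.val) :
    PMF.map
        (fun y : ZMod r => (R₁ * R₂ * g ^ y.val, C₁ * C₂ * (g ^ u.val) ^ y.val))
        (PMF.uniformOfFintype (ZMod r)) =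
      PMF.uniformOfFinset
        (Finset.univ.image fun t : ZMod r =>
          (g ^ t.val, g ^ (m₁ + m₂).val * (g ^ u.val) ^ t.val))
        (Finset.univ_nonempty.image _) :=
  elgamal_rerandomized_add_uniform_general r g hgen u m₁ m₂ R₁ C₁ R₂ C₂ h₁ h₂
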